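/- Let ω be a fixed angle with 0 < ω < π. Let q = (s,t) ∈ ℝ² with t > 0. Let b = (b₁, 0), c = (c₁, 0), b' = (b₁', 0), c' = (c₁', 0) be points on the x-axis with b₁ < c₁ and b₁' < c₁', such that ∠(b, q, c) = ω, ∠(b', q, c') = ω, and ‖q − b‖ = ‖q − c‖. Then c₁ − b₁ ≤ c₁' − b₁'; consequently the area (1/2)(c₁ − b₁)·t of triangle qbc is at most the area (1/2)(c₁' − b₁')·t of triangle qb'c', i.e., among all triangles with vertex q, angle ω at q, and opposite side on the x-axis, the isosceles one has minimum area. -/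

import Mathlib

/-!
Seen from `q = (s, t)`, a point `(x, 0)` of the axis lies in direction `arctan ((x - s) / t)`
from the downward vertical, so a base `[b₁, c₁]` seen under the angle `ω` has length
`t (tan (α + ω) - tan α)` for some `α` with `-π/2 < α < α + ω < π/2`. Since
`tan (α + ω) - tan α = sin ω / (cos α cos (α + ω))` and
`2 cos α cos (α + ω) = cos ω + cos (2α + ω) ≤ 1 + cos ω = 2 cos² (ω/2)`,
this length is at least `2 t tan (ω/2)`, which is attained by the symmetric choice `α = -ω/2`,
i.e. by the isosceles triangle.
-/

open Real EuclideanGeometry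
open scoped RealInnerProductSpace

/-- The point of the Euclidean plane with coordinates `x` and `y`. -/
def pt (x y : ℝ) : EuclideanSpace ℝ (Fin 2) := !₂[x, y]

lemma pt_sub_pt (x y x' y' : ℝ) : pt x y - pt x' y' = pt (x - x') (y - y') := by
  ext i; fin_cases i <;> simp [pt]

lemma inner_pt_pt (x y x' y' : ℝ) : ⟪pt x y, pt x' y'⟫ = x * x' + y * y' := by
  simp [pt, PiLp.inner_apply, Fin.sum_univ_two, mul_comm]

lemma norm_pt (x y : ℝ) : ‖pt x y‖ = √(x ^ 2 + y ^ 2) := by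
  simp [pt, EuclideanSpace.norm_eq, Fin.sum_univ_two]

lemma two_mul_tan_half_le_tan_add_sub_tan {ω a : ℝ} (hω : 0 ≤ ω) (ha : -(π / 2) < a)
    (haω : a + ω < π / 2) : 2 * tan (ω / 2) ≤ tan (a + ω) - tan a := by
  have hca : 0 < cos a := cos_pos_of_mem_Ioo ⟨ha, by linarith⟩
  have hcaω : 0 < cos (a + ω) := cos_pos_of_mem_Ioo ⟨by linarith, haω⟩
  have hch : 0 < cos (ω / 2) := cos_pos_of_mem_Ioo ⟨by linarith [pi_pos], by linarith⟩
  have hsω : 0 ≤ sin ω := sin_nonneg_of_nonneg_of_le_pi hω (by linarith)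
  have htan_sub : tan (a + ω) - tan a = sin ω / (cos a * cos (a + ω)) := by
    rw [tan_eq_sin_div_cos, tan_eq_sin_div_cos, div_sub_div _ _ hcaω.ne' hca.ne',
      show ω = (a + ω) - a by ring, sin_sub]
    ring_nf
  have htan_half : 2 * tan (ω / 2) = sin ω / cos (ω / 2) ^ 2 := by
    rw [tan_eq_sin_div_cos, show ω = 2 * (ω / 2) by ring, sin_two_mul]
    field_simp
  have hprod : 2 * (cos a * cos (a + ω)) = cos ω + cos (a + (a + ω)) := by
    rw [cos_add a (a + ω), show ω = (a + ω) - a by ring, cos_sub]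
    ring_nf
  have hcos_sq : cos (ω / 2) ^ 2 = 1 / 2 + cos ω / 2 := by
    rw [cos_sq, show 2 * (ω / 2) = ω by ring]
  rw [htan_sub, htan_half]
  apply div_le_div_of_nonneg_left hsω (by positivity)
  nlinarith [cos_le_one (a + (a + ω))]

section AxisBase

variable {s t x y : ℝ}

lemma angle_pt_eq_abs_arctan_sub (ht : 0 < t) :
    ∠ (pt x 0) (pt s t) (pt y 0) = |arctan ((y - s) / t) - arctan ((x - s) / t)| := by
  set α := arctan ((x - s) / t)
  set β := arctan ((y - s) / t)
  have hnorm (z : ℝ) : √((z - s) ^ 2 + (0 - t) ^ 2) = t * √(1 + ((z - s) / t) ^ 2) := by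
    rw [← sqrt_sq ht.le, ← sqrt_mul (sq_nonneg t), sqrt_sq ht.le]
    congr 1
    field_simp
    ring
  have hcos : cos (β - α) = ((x - s) * (y - s) + (0 - t) * (0 - t)) /
      (√((x - s) ^ 2 + (0 - t) ^ 2) * √((y - s) ^ 2 + (0 - t) ^ 2)) := by
    have hx : 0 < √(1 + ((x - s) / t) ^ 2) := sqrt_pos.2 (by positivity)
    have hy : 0 < √(1 + ((y - s) / t) ^ 2) := sqrt_pos.2 (by positivity)
    rw [cos_sub, cos_arctan, sin_arctan, cos_arctan, sin_arctan, hnorm, hnorm]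
    field_simp
    ring
  have hβα : |β - α| ≤ π := by
    rw [abs_le]
    constructor <;> linarith [arctan_lt_pi_div_two ((y - s) / t),
      neg_pi_div_two_lt_arctan ((y - s) / t), arctan_lt_pi_div_two ((x - s) / t),
      neg_pi_div_two_lt_arctan ((x - s) / t)]
  rw [EuclideanGeometry.angle, InnerProductGeometry.angle, vsub_eq_sub, vsub_eq_sub,
    pt_sub_pt, pt_sub_pt, inner_pt_pt, norm_pt, norm_pt, ← hcos, ← cos_abs]
  exact arccos_cos (abs_nonneg _) hβα

lemma angle_pt_eq_arctan_sub (ht : 0 < t) (hxy : x < y) :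
    ∠ (pt x 0) (pt s t) (pt y 0) = arctan ((y - s) / t) - arctan ((x - s) / t) := by
  rw [angle_pt_eq_abs_arctan_sub ht, abs_of_pos]
  exact sub_pos.2 (arctan_strictMono (div_lt_div_of_pos_right (by linarith) ht))

lemma two_mul_tan_half_angle_le_sub (ht : 0 < t) (hxy : x < y) :
    2 * t * tan (∠ (pt x 0) (pt s t) (pt y 0) / 2) ≤ y - x := by
  set α := arctan ((x - s) / t)
  set β := arctan ((y - s) / t)
  have hαβ : α < β := arctan_strictMono (div_lt_div_of_pos_right (by linarith) ht)
  have hbase : y - x = t * (tan (α + (β - α)) - tan α) := by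
    rw [add_sub_cancel, tan_arctan, tan_arctan]
    field_simp
    ring
  have hkey := two_mul_tan_half_le_tan_add_sub_tan (ω := β - α) (a := α) (by linarith)
    (neg_pi_div_two_lt_arctan _) (by simpa using arctan_lt_pi_div_two ((y - s) / t))
  rw [angle_pt_eq_arctan_sub ht hxy, hbase]
  nlinarith

lemma sub_eq_two_mul_tan_half_angle_of_norm_eq (ht : 0 < t) (hxy : x < y)
    (hiso : ‖pt s t - pt x 0‖ = ‖pt s t - pt y 0‖) :
    y - x = 2 * t * tan (∠ (pt x 0) (pt s t) (pt y 0) / 2) := by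
  have hsym : x - s = -(y - s) := by
    rw [pt_sub_pt, pt_sub_pt, norm_pt, norm_pt,
      sqrt_inj (by positivity) (by positivity)] at hiso
    nlinarith
  have hhalf : ∠ (pt x 0) (pt s t) (pt y 0) / 2 = arctan ((y - s) / t) := by
    rw [angle_pt_eq_arctan_sub ht hxy, hsym, neg_div, arctan_neg]
    ring
  rw [hhalf, tan_arctan]
  field_simp
  linarith

end AxisBase

theorem isosceles_triangle_minimizes_area_general
    (ω s t b₁ c₁ b₁' c₁' : ℝ) (ht : 0 < t)
    (hbc : b₁ < c₁) (hbc' : b₁' < c₁')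
    (hang : EuclideanGeometry.angle (pt b₁ 0) (pt s t) (pt c₁ 0) = ω)
    (hang' : EuclideanGeometry.angle (pt b₁' 0) (pt s t) (pt c₁' 0) = ω)
    (hiso : ‖pt s t - pt b₁ 0‖ = ‖pt s t - pt c₁ 0‖) :
    c₁ - b₁ ≤ c₁' - b₁' ∧
    (1 / 2) * (c₁ - b₁) * t ≤ (1 / 2) * (c₁' - b₁') * t := by
  have hbase : c₁ - b₁ ≤ c₁' - b₁' := by
    calc c₁ - b₁ = 2 * t * tan (ω / 2) := by
          rw [← hang]; exact sub_eq_two_mul_tan_half_angle_of_norm_eq ht hbc hiso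
      _ ≤ c₁' - b₁' := by rw [← hang']; exact two_mul_tan_half_angle_le_sub ht hbc'
  exact ⟨hbase, by gcongr⟩

theorem isosceles_triangle_minimizes_area
    (ω s t b₁ c₁ b₁' c₁' : ℝ) (hω₀ : 0 < ω) (hω₁ : ω < π) (ht : 0 < t)
    (hbc : b₁ < c₁) (hbc' : b₁' < c₁')
    (hang : EuclideanGeometry.angle (pt b₁ 0) (pt s t) (pt c₁ 0) = ω)
    (hang' : EuclideanGeometry.angle (pt b₁' 0) (pt s t) (pt c₁' 0) = ω)
    (hiso : ‖pt s t - pt b₁ 0‖ = ‖pt s t - pt c₁ 0‖) :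
    c₁ - b₁ ≤ c₁' - b₁' ∧
    (1 / 2) * (c₁ - b₁) * t ≤ (1 / 2) * (c₁' - b₁') * t :=
  isosceles_triangle_minimizes_area_general ω s t b₁ c₁ b₁' c₁' ht hbc hbc' hang hang' hiso
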